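/- arXiv:2102.09111 — 8 statements merged into one kernel-verified Lean document; each statement's English description precedes it below -/
import Mathlib

section
/- Let F : ℝⁿ → ℝ (Euclidean space with its inner product) be convex and let μ > 0. Suppose for each u ∈ ℝⁿ the infimum defining the Moreau envelope F_μ(u) := ⨅_{z ∈ ℝⁿ} ( F(z) + ‖z − u‖²/(2μ) ) is attained at a unique point prox(u). Then F_μ is convex, F_μ is differentiable at every u with gradient ∇F_μ(u) = (u − prox(u))/μ, and the gradient map u ↦ ∇F_μ(u) is Lipschitz with constant 1/μ. -/
/-!
Minimality of the proximal point `p` of `u` along the segment from `p` to any `z`, as the step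
tends to `0`, shows that `(u - p)/μ` is a subgradient of `F` at `p`. Adding these subgradient
inequalities at two points makes the proximal map firmly nonexpansive, so
`u ↦ (u - prox u)/μ` is `1/μ`-Lipschitz. Evaluating the objective of `v` at the proximal
point of `u` bounds `F_μ` above by a quadratic touching it at `u` with slope `(u - prox u)/μ`;
the same bound taken at `v`, together with the Lipschitz estimate, bounds the remainder from
below, so `F_μ` is differentiable. Convexity holds because the objective
`(z, u) ↦ F z + ‖z - u‖²/(2μ)` is jointly convex.
-/

open scoped RealInnerProductSpace

open Filter Topology

section MoreauEnvelope

variable {E : Type*} [NormedAddCommGroup E]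

noncomputable def moreauEnvelope (F : E → ℝ) (μ : ℝ) (u : E) : ℝ :=
  ⨅ z, F z + ‖z - u‖ ^ 2 / (2 * μ)

def IsProxPoint (F : E → ℝ) (μ : ℝ) (u p : E) : Prop :=
  ∀ z, F p + ‖p - u‖ ^ 2 / (2 * μ) ≤ F z + ‖z - u‖ ^ 2 / (2 * μ)

namespace IsProxPoint

variable {F : E → ℝ} {μ : ℝ} {u v p q : E}

theorem moreauEnvelope_le (hp : IsProxPoint F μ u p) (z : E) :
    moreauEnvelope F μ u ≤ F z + ‖z - u‖ ^ 2 / (2 * μ) :=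
  ciInf_le ⟨_, Set.forall_mem_range.2 hp⟩ z

theorem moreauEnvelope_eq (hp : IsProxPoint F μ u p) :
    moreauEnvelope F μ u = F p + ‖p - u‖ ^ 2 / (2 * μ) :=
  (hp.moreauEnvelope_le p).antisymm (le_ciInf hp)

end IsProxPoint

variable [InnerProductSpace ℝ E]

theorem norm_sub_le_of_norm_sq_le_inner {a b : E} (h : ‖a‖ ^ 2 ≤ ⟪b, a⟫) : ‖b - a‖ ≤ ‖b‖ := by
  refine (pow_le_pow_iff_left₀ (norm_nonneg _) (norm_nonneg _) two_ne_zero).1 ?_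
  rw [norm_sub_sq_real]
  nlinarith [sq_nonneg ‖a‖]

theorem hasGradientAt_of_le_add_inner_add_sq [CompleteSpace E] {f : E → ℝ} {g : E → E}
    {C L : ℝ} (hf : ∀ u v, f v ≤ f u + ⟪g u, v - u⟫ + C * ‖v - u‖ ^ 2)
    (hg : ∀ u v, ‖g u - g v‖ ≤ L * ‖u - v‖) (u : E) : HasGradientAt f (g u) u := by
  rw [hasGradientAt_iff_isLittleO]
  refine Asymptotics.IsBigO.trans_isLittleO ?_ (Asymptotics.isLittleO_pow_sub_sub u one_lt_two)
  refine .of_bound (|C| + L) (.of_forall fun v => ?_)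
  have upper := hf u v
  have lower := hf v u
  have hswap : ⟪g v, u - v⟫ = -⟪g u, v - u⟫ - ⟪g v - g u, v - u⟫ := by
    rw [← neg_sub v u, inner_neg_right, inner_sub_left]
    ring
  have hlip : |⟪g v - g u, v - u⟫| ≤ L * ‖v - u‖ ^ 2 := by
    calc |⟪g v - g u, v - u⟫| ≤ ‖g v - g u‖ * ‖v - u‖ := abs_real_inner_le_norm _ _
      _ ≤ L * ‖v - u‖ * ‖v - u‖ := by gcongr; exact hg v u
      _ = L * ‖v - u‖ ^ 2 := by ring
  have hC : |C * ‖v - u‖ ^ 2| ≤ |C| * ‖v - u‖ ^ 2 := by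
    rw [abs_mul, abs_of_nonneg (sq_nonneg ‖v - u‖)]
  rw [norm_sub_rev u v, hswap] at lower
  rw [Real.norm_eq_abs, norm_pow, norm_norm, abs_le]
  constructor <;> linarith [abs_le.1 hlip, abs_le.1 hC]

theorem convexOn_moreauEnvelope {F : E → ℝ} {μ : ℝ} (hF : ConvexOn ℝ Set.univ F) (hμ : 0 ≤ μ)
    (hprox : ∀ u, ∃ p, IsProxPoint F μ u p) : ConvexOn ℝ Set.univ (moreauEnvelope F μ) := by
  refine ⟨convex_univ, fun u _ v _ a b ha hb hab => ?_⟩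
  obtain ⟨p, hp⟩ := hprox u
  obtain ⟨q, hq⟩ := hprox v
  obtain ⟨r, hr⟩ := hprox (a • u + b • v)
  have hsq : ‖a • p + b • q - (a • u + b • v)‖ ^ 2 ≤ a * ‖p - u‖ ^ 2 + b * ‖q - v‖ ^ 2 := by
    have := (convexOn_univ_norm.pow (fun _ _ => norm_nonneg _) 2).2 (Set.mem_univ (p - u))
      (Set.mem_univ (q - v)) ha hb hab
    simp only [Pi.pow_apply, smul_eq_mul] at this
    rwa [show a • p + b • q - (a • u + b • v) = a • (p - u) + b • (q - v) by module]
  calc moreauEnvelope F μ (a • u + b • v)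
      ≤ F (a • p + b • q) + ‖a • p + b • q - (a • u + b • v)‖ ^ 2 / (2 * μ) :=
        hr.moreauEnvelope_le _
    _ ≤ (a * F p + b * F q) + (a * ‖p - u‖ ^ 2 + b * ‖q - v‖ ^ 2) / (2 * μ) := by
        gcongr
        exact hF.2 (Set.mem_univ p) (Set.mem_univ q) ha hb hab
    _ = a * moreauEnvelope F μ u + b * moreauEnvelope F μ v := by
        rw [hp.moreauEnvelope_eq, hq.moreauEnvelope_eq]
        ring

namespace IsProxPoint

variable {F : E → ℝ} {μ : ℝ} {u v p q : E}

theorem inner_le (hF : ConvexOn ℝ Set.univ F) (hμ : 0 < μ) (hp : IsProxPoint F μ u p)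
    (z : E) : ⟪u - p, z - p⟫ ≤ μ * (F z - F p) := by
  have key : ∀ t ∈ Set.Ioc (0 : ℝ) 1,
      ⟪u - p, z - p⟫ ≤ μ * (F z - F p) + t * (‖z - p‖ ^ 2 / 2) := by
    rintro t ⟨ht0, ht1⟩
    have hconv : F (p + t • (z - p)) ≤ (1 - t) * F p + t * F z := by
      have := hF.2 (Set.mem_univ p) (Set.mem_univ z) (sub_nonneg.2 ht1) ht0.le (by ring)
      rwa [show (1 - t) • p + t • z = p + t • (z - p) by module] at this
    have hnorm : ‖p + t • (z - p) - u‖ ^ 2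
        = ‖p - u‖ ^ 2 - 2 * t * ⟪u - p, z - p⟫ + t ^ 2 * ‖z - p‖ ^ 2 := by
      rw [show p + t • (z - p) - u = (p - u) + t • (z - p) by abel, norm_add_sq_real,
        inner_smul_right, norm_smul, mul_pow, Real.norm_eq_abs, sq_abs,
        ← neg_sub u p, inner_neg_left]
      ring
    have hmin := hp (p + t • (z - p))
    rw [hnorm] at hmin
    have h2μ : 0 < 2 * μ := by positivity
    have hscaled : 2 * t * ⟪u - p, z - p⟫ ≤ 2 * μ * t * (F z - F p) + t ^ 2 * ‖z - p‖ ^ 2 := by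
      rw [← sub_nonneg] at hmin ⊢
      have := mul_nonneg hmin h2μ.le
      field_simp at this
      nlinarith
    nlinarith
  have hlim : Tendsto (fun t : ℝ => μ * (F z - F p) + t * (‖z - p‖ ^ 2 / 2))
      (𝓝[>] 0) (𝓝 (μ * (F z - F p))) := by
    refine tendsto_nhdsWithin_of_tendsto_nhds ?_
    simpa using ((tendsto_id (x := 𝓝 (0 : ℝ))).mul_const (‖z - p‖ ^ 2 / 2)).const_add
      (μ * (F z - F p))
  exact ge_of_tendsto hlim (mem_of_superset (Ioc_mem_nhdsGT one_pos) key)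

theorem norm_sub_sq_le_inner (hF : ConvexOn ℝ Set.univ F) (hμ : 0 < μ)
    (hp : IsProxPoint F μ u p) (hq : IsProxPoint F μ v q) : ‖p - q‖ ^ 2 ≤ ⟪u - v, p - q⟫ := by
  have hpq := hp.inner_le hF hμ q
  have hqp := hq.inner_le hF hμ p
  have hsum : ⟪u - p, q - p⟫ + ⟪v - q, p - q⟫ = ‖p - q‖ ^ 2 - ⟪u - v, p - q⟫ := by
    rw [← real_inner_self_eq_norm_sq, ← neg_sub p q, inner_neg_right, ← sub_eq_neg_add,
      ← inner_sub_left, ← inner_sub_left]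
    congr 1
    abel
  linarith

theorem norm_smul_sub_sub_le (hF : ConvexOn ℝ Set.univ F) (hμ : 0 < μ)
    (hp : IsProxPoint F μ u p) (hq : IsProxPoint F μ v q) :
    ‖μ⁻¹ • (u - p) - μ⁻¹ • (v - q)‖ ≤ 1 / μ * ‖u - v‖ := by
  rw [← smul_sub, norm_smul, Real.norm_eq_abs, abs_of_pos (inv_pos.2 hμ), one_div,
    show u - p - (v - q) = (u - v) - (p - q) by abel]
  exact mul_le_mul_of_nonneg_left
    (norm_sub_le_of_norm_sq_le_inner (hp.norm_sub_sq_le_inner hF hμ hq)) (inv_pos.2 hμ).le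

theorem moreauEnvelope_le_add_inner (hμ : μ ≠ 0) (hp : IsProxPoint F μ u p)
    (hq : IsProxPoint F μ v q) :
    moreauEnvelope F μ v ≤
      moreauEnvelope F μ u + ⟪μ⁻¹ • (u - p), v - u⟫ + 1 / (2 * μ) * ‖v - u‖ ^ 2 := by
  have hexp : ‖p - v‖ ^ 2 = ‖p - u‖ ^ 2 + 2 * ⟪u - p, v - u⟫ + ‖v - u‖ ^ 2 := by
    rw [show p - v = (p - u) - (v - u) by abel, norm_sub_sq_real, ← neg_sub u p,
      inner_neg_left]
    ring
  calc moreauEnvelope F μ v ≤ F p + ‖p - v‖ ^ 2 / (2 * μ) := hq.moreauEnvelope_le p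
    _ = _ := by
      rw [hp.moreauEnvelope_eq, hexp, real_inner_smul_left]
      field_simp
      ring

end IsProxPoint

end MoreauEnvelope

theorem moreau_envelope_smooth_general
    {n : ℕ} (F : EuclideanSpace ℝ (Fin n) → ℝ) (hF : ConvexOn ℝ Set.univ F)
    (μ : ℝ) (hμ : 0 < μ)
    (prox : EuclideanSpace ℝ (Fin n) → EuclideanSpace ℝ (Fin n))
    (hmin : ∀ u z, F (prox u) + ‖prox u - u‖ ^ 2 / (2 * μ) ≤ F z + ‖z - u‖ ^ 2 / (2 * μ)) :
    ConvexOn ℝ Set.univ (fun u => ⨅ z, (F z + ‖z - u‖ ^ 2 / (2 * μ))) ∧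
    (∀ u, HasGradientAt (fun u => ⨅ z, (F z + ‖z - u‖ ^ 2 / (2 * μ)))
      (μ⁻¹ • (u - prox u)) u) ∧
    (∀ u v, ‖μ⁻¹ • (u - prox u) - μ⁻¹ • (v - prox v)‖ ≤ (1 / μ) * ‖u - v‖) := by
  have hprox : ∀ u, IsProxPoint F μ u (prox u) := hmin
  have hlip : ∀ u v, ‖μ⁻¹ • (u - prox u) - μ⁻¹ • (v - prox v)‖ ≤ 1 / μ * ‖u - v‖ :=
    fun u v => (hprox u).norm_smul_sub_sub_le hF hμ (hprox v)
  refine ⟨convexOn_moreauEnvelope hF hμ.le fun u => ⟨prox u, hprox u⟩, fun u => ?_, hlip⟩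
  exact hasGradientAt_of_le_add_inner_add_sq
    (fun u v => (hprox u).moreauEnvelope_le_add_inner hμ.ne' (hprox v)) hlip u

/-- **Smoothness of the Moreau envelope.** If `F : ℝⁿ → ℝ` is convex, `μ > 0`, and the
infimum defining the Moreau envelope `F_μ(u) = ⨅_z (F z + ‖z - u‖²/(2μ))` is attained at
a unique point `prox u` for every `u`, then `F_μ` is convex, differentiable everywhere
with gradient `∇F_μ(u) = (u − prox u)/μ`, and this gradient map is `(1/μ)`-Lipschitz. -/
theorem moreau_envelope_smooth
    {n : ℕ} (F : EuclideanSpace ℝ (Fin n) → ℝ) (hF : ConvexOn ℝ Set.univ F)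
    (μ : ℝ) (hμ : 0 < μ)
    (prox : EuclideanSpace ℝ (Fin n) → EuclideanSpace ℝ (Fin n))
    (hmin : ∀ u z, F (prox u) + ‖prox u - u‖ ^ 2 / (2 * μ) ≤ F z + ‖z - u‖ ^ 2 / (2 * μ))
    (huniq : ∀ u z, (∀ w, F z + ‖z - u‖ ^ 2 / (2 * μ) ≤ F w + ‖w - u‖ ^ 2 / (2 * μ)) →
      z = prox u) :
    ConvexOn ℝ Set.univ (fun u => ⨅ z, (F z + ‖z - u‖ ^ 2 / (2 * μ))) ∧
    (∀ u, HasGradientAt (fun u => ⨅ z, (F z + ‖z - u‖ ^ 2 / (2 * μ)))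
      (μ⁻¹ • (u - prox u)) u) ∧
    (∀ u v, ‖μ⁻¹ • (u - prox u) - μ⁻¹ • (v - prox v)‖ ≤ (1 / μ) * ‖u - v‖) :=
  moreau_envelope_smooth_general F hF μ hμ prox hmin
end

section
/- Let F : ℝⁿ → ℝ be M-strongly convex with M > 0, i.e. F(a·x + b·y) ≤ a·F(x) + b·F(y) − a·b·(M/2)·‖x − y‖² for all x, y ∈ ℝⁿ and a, b ≥ 0 with a + b = 1, and let μ > 0. Then the Moreau envelope F_μ is (M/(1 + μM))-strongly convex on ℝⁿ. -/
open Metric Set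

variable {E : Type*} [NormedAddCommGroup E] [InnerProductSpace ℝ E]

lemma comb_norm_sq (v w : E) (a b : ℝ) (hab : a + b = 1) :
    ‖a • v + b • w‖ ^ 2 = a * ‖v‖ ^ 2 + b * ‖w‖ ^ 2 - a * b * ‖v - w‖ ^ 2 := by
  have h1 : ‖a • v + b • w‖ ^ 2
      = a^2 * ‖v‖^2 + 2 * (a * b * inner ℝ v w) + b^2 * ‖w‖^2 := by
    rw [norm_add_sq_real, norm_smul, norm_smul, real_inner_smul_left, real_inner_smul_right]
    simp [mul_pow]
    ring_nf
  have h2 : ‖v - w‖ ^ 2 = ‖v‖^2 - 2 * inner ℝ v w + ‖w‖^2 := norm_sub_sq_real v w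
  have : b = 1 - a := by linarith
  subst this
  rw [h1, h2]; ring

lemma key_scalar (M μ : ℝ) (hM : 0 < M) (hμ : 0 < μ) (d e : E) :
    (M / (1 + μ * M)) / 2 * ‖e‖ ^ 2 ≤ M / 2 * ‖d‖ ^ 2 + ‖d - e‖ ^ 2 / (2 * μ) := by
  set c : ℝ := 1 + μ * M with hc
  have hcpos : 0 < c := by positivity
  have h1 : ‖c • d - e‖ ^ 2 = c^2 * ‖d‖^2 - 2 * (c * inner ℝ d e) + ‖e‖^2 := by
    rw [norm_sub_sq_real, norm_smul, real_inner_smul_left]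
    simp [mul_pow]
  have h2 : ‖d - e‖ ^ 2 = ‖d‖^2 - 2 * inner ℝ d e + ‖e‖^2 := norm_sub_sq_real d e
  have key : M / 2 * ‖d‖ ^ 2 + ‖d - e‖ ^ 2 / (2 * μ) - M / c / 2 * ‖e‖ ^ 2
      = ‖c • d - e‖ ^ 2 / (2 * μ * c) := by
    rw [h1, h2, hc]
    field_simp
    ring
  have hpos : 0 ≤ ‖c • d - e‖ ^ 2 / (2 * μ * c) := by positivity
  linarith

lemma moreau_bddBelow {n : ℕ} (F : EuclideanSpace ℝ (Fin n) → ℝ) (M : ℝ) (hM : 0 < M)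
    (hF : ∀ x y : EuclideanSpace ℝ (Fin n), ∀ a b : ℝ, 0 ≤ a → 0 ≤ b → a + b = 1 →
      F (a • x + b • y) ≤ a * F x + b * F y - a * b * (M / 2) * ‖x - y‖ ^ 2)
    (μ : ℝ) (hμ : 0 < μ) (u : EuclideanSpace ℝ (Fin n)) :
    BddBelow (Set.range fun z => F z + ‖z - u‖ ^ 2 / (2 * μ)) := by
  have hconv : ConvexOn ℝ Set.univ F := by
    refine ⟨convex_univ, fun x _ y _ a b ha hb hab => ?_⟩
    have h := hF x y a b ha hb hab
    have hq : 0 ≤ a * b * (M / 2) * ‖x - y‖ ^ 2 := by positivity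
    simp only [smul_eq_mul]
    linarith
  have hcont : ContinuousOn F (Set.univ : Set (EuclideanSpace ℝ (Fin n))) :=
    hconv.continuousOn isOpen_univ
  have hcomp : IsCompact (closedBall u 1) := isCompact_closedBall u 1
  obtain ⟨m, hm⟩ : BddBelow (F '' closedBall u 1) :=
    (hcomp.image_of_continuousOn (hcont.mono (Set.subset_univ _))).bddBelow
  have hmball : ∀ z ∈ closedBall u 1, m ≤ F z := fun z hz => hm ⟨z, hz, rfl⟩
  have hmu : m ≤ F u := hmball u (mem_closedBall_self (by norm_num))
  refine ⟨min m (F u - μ * (F u - m) ^ 2 / 2), fun v hv => ?_⟩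
  obtain ⟨z, rfl⟩ := hv
  simp only
  set C : ℝ := F u - m with hCdef
  clear_value C
  have hC : 0 ≤ C := by rw [hCdef]; linarith
  by_cases h : ‖z - u‖ ≤ 1
  · have hz : z ∈ closedBall u 1 := by
      rw [mem_closedBall, dist_eq_norm]; exact h
    have h1 := hmball z hz
    have h2 : (0:ℝ) ≤ ‖z - u‖ ^ 2 / (2 * μ) := by positivity
    calc min m (F u - μ * C ^ 2 / 2) ≤ m := min_le_left _ _
      _ ≤ F z + ‖z - u‖ ^ 2 / (2 * μ) := by linarith
  · push_neg at h
    set r : ℝ := ‖z - u‖ with hr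
    have hr1 : 1 < r := h
    have hr0 : 0 < r := by linarith
    clear_value r
    set s : ℝ := 1 / r with hs
    clear_value s
    have hs0 : 0 < s := by rw [hs]; positivity
    have hs1 : s ≤ 1 := by rw [hs, div_le_one hr0]; linarith
    have hwnorm : ‖((1 - s) • u + s • z) - u‖ = 1 := by
      have hvec : ((1 - s) • u + s • z) - u = s • (z - u) := by module
      rw [hvec, norm_smul, Real.norm_eq_abs, abs_of_pos hs0, ← hr, hs]
      field_simp
    have hwball : (1 - s) • u + s • z ∈ closedBall u 1 := by
      rw [mem_closedBall, dist_eq_norm, hwnorm]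
    have hFw := hF u z (1 - s) s (by linarith) hs0.le (by ring)
    have hq : 0 ≤ (1 - s) * s * (M / 2) * ‖u - z‖ ^ 2 :=
      mul_nonneg (mul_nonneg (mul_nonneg (by linarith) hs0.le) (by positivity)) (by positivity)
    have hmw : m ≤ (1 - s) * F u + s * F z := by
      have := hmball _ hwball
      linarith
    have hmul : r * ((1 - s) * F u + s * F z) = (r - 1) * F u + F z := by
      rw [hs]; field_simp
    have h2 : r * m ≤ (r - 1) * F u + F z := by
      rw [← hmul]; exact mul_le_mul_of_nonneg_left hmw hr0.le
    have h3 : r * C = r * F u - r * m := by rw [hCdef]; ring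
    have hFz : F u - r * C ≤ F z := by
      rw [h3] at *; linarith
    have hquad : r * C - μ * C ^ 2 / 2 ≤ r ^ 2 / (2 * μ) := by
      rw [le_div_iff₀ (by positivity)]
      nlinarith [sq_nonneg (r - μ * C)]
    calc min m (F u - μ * C ^ 2 / 2) ≤ F u - μ * C ^ 2 / 2 := min_le_right _ _
      _ ≤ F z + r ^ 2 / (2 * μ) := by linarith

/-- **Strong convexity of the Moreau envelope.** If `F : ℝⁿ → ℝ` is `M`-strongly convex
with `M > 0` and `μ > 0`, then the Moreau envelope
`F_μ(u) = ⨅_z (F z + ‖z - u‖²/(2μ))` is `(M/(1 + μM))`-strongly convex. -/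
theorem moreau_envelope_strongConvex
    {n : ℕ} (F : EuclideanSpace ℝ (Fin n) → ℝ) (M : ℝ) (hM : 0 < M)
    (hF : ∀ x y : EuclideanSpace ℝ (Fin n), ∀ a b : ℝ, 0 ≤ a → 0 ≤ b → a + b = 1 →
      F (a • x + b • y) ≤ a * F x + b * F y - a * b * (M / 2) * ‖x - y‖ ^ 2)
    (μ : ℝ) (hμ : 0 < μ) :
    ∀ x y : EuclideanSpace ℝ (Fin n), ∀ a b : ℝ, 0 ≤ a → 0 ≤ b → a + b = 1 →
      (⨅ z, (F z + ‖z - (a • x + b • y)‖ ^ 2 / (2 * μ))) ≤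
        a * (⨅ z, (F z + ‖z - x‖ ^ 2 / (2 * μ))) +
        b * (⨅ z, (F z + ‖z - y‖ ^ 2 / (2 * μ))) -
        a * b * ((M / (1 + μ * M)) / 2) * ‖x - y‖ ^ 2 := by
  intro x y a b ha hb hab
  -- degenerate cases
  rcases eq_or_lt_of_le ha with ha0 | ha'
  · have hb1 : b = 1 := by linarith
    subst hb1
    simp [← ha0]
  rcases eq_or_lt_of_le hb with hb0 | hb'
  · have ha1 : a = 1 := by linarith
    subst ha1
    simp [← hb0]
  set u : EuclideanSpace ℝ (Fin n) := a • x + b • y with hu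
  have hbdd := moreau_bddBelow F M hM hF μ hμ u
  have H : ∀ z₁ z₂ : EuclideanSpace ℝ (Fin n),
      (⨅ z, (F z + ‖z - u‖ ^ 2 / (2 * μ))) ≤
        a * (F z₁ + ‖z₁ - x‖ ^ 2 / (2 * μ)) + b * (F z₂ + ‖z₂ - y‖ ^ 2 / (2 * μ)) -
        a * b * ((M / (1 + μ * M)) / 2) * ‖x - y‖ ^ 2 := by
    intro z₁ z₂
    have h0 : (⨅ z, (F z + ‖z - u‖ ^ 2 / (2 * μ)))
        ≤ F (a • z₁ + b • z₂) + ‖(a • z₁ + b • z₂) - u‖ ^ 2 / (2 * μ) :=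
      ciInf_le hbdd (a • z₁ + b • z₂)
    have hvec : (a • z₁ + b • z₂) - u = a • (z₁ - x) + b • (z₂ - y) := by
      rw [hu]; module
    have hdiff : (z₁ - x) - (z₂ - y) = (z₁ - z₂) - (x - y) := by module
    have h2 : ‖(a • z₁ + b • z₂) - u‖ ^ 2
        = a * ‖z₁ - x‖ ^ 2 + b * ‖z₂ - y‖ ^ 2 - a * b * ‖(z₁ - z₂) - (x - y)‖ ^ 2 := by
      rw [hvec, comb_norm_sq _ _ a b hab, hdiff]
    have hF' := hF z₁ z₂ a b ha hb hab
    have hkey := key_scalar M μ hM hμ (z₁ - z₂) (x - y)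
    have hkey' := mul_le_mul_of_nonneg_left hkey (mul_nonneg ha hb)
    have h2' : ‖(a • z₁ + b • z₂) - u‖ ^ 2 / (2 * μ)
        = (a * ‖z₁ - x‖ ^ 2 + b * ‖z₂ - y‖ ^ 2 - a * b * ‖(z₁ - z₂) - (x - y)‖ ^ 2) / (2 * μ) := by
      rw [h2]
    have hsplit : (a * ‖z₁ - x‖ ^ 2 + b * ‖z₂ - y‖ ^ 2 - a * b * ‖(z₁ - z₂) - (x - y)‖ ^ 2) / (2 * μ)
        = a * (‖z₁ - x‖ ^ 2 / (2 * μ)) + b * (‖z₂ - y‖ ^ 2 / (2 * μ))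
          - a * b * (‖(z₁ - z₂) - (x - y)‖ ^ 2 / (2 * μ)) := by
      field_simp
    have hkey'' : a * b * ((M / (1 + μ * M)) / 2 * ‖x - y‖ ^ 2)
        ≤ a * b * (M / 2 * ‖z₁ - z₂‖ ^ 2 + ‖(z₁ - z₂) - (x - y)‖ ^ 2 / (2 * μ)) := hkey'
    linarith [h0, hF', h2', hsplit, hkey'']
  -- nested infima argument
  set Ix : ℝ := ⨅ z, (F z + ‖z - x‖ ^ 2 / (2 * μ)) with hIx
  set Iy : ℝ := ⨅ z, (F z + ‖z - y‖ ^ 2 / (2 * μ)) with hIy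
  set c : ℝ := a * b * ((M / (1 + μ * M)) / 2) * ‖x - y‖ ^ 2 with hc
  have step1 : ∀ z₁ : EuclideanSpace ℝ (Fin n),
      (⨅ z, (F z + ‖z - u‖ ^ 2 / (2 * μ))) + c - a * (F z₁ + ‖z₁ - x‖ ^ 2 / (2 * μ)) ≤ b * Iy := by
    intro z₁
    have : ((⨅ z, (F z + ‖z - u‖ ^ 2 / (2 * μ))) + c - a * (F z₁ + ‖z₁ - x‖ ^ 2 / (2 * μ))) / b
        ≤ Iy := by
      rw [hIy]
      refine le_ciInf fun z₂ => ?_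
      rw [div_le_iff₀ hb']
      linarith [H z₁ z₂]
    have h := (div_le_iff₀ hb').mp this
    linarith [h]
  have step2 : (⨅ z, (F z + ‖z - u‖ ^ 2 / (2 * μ))) + c - b * Iy ≤ a * Ix := by
    have : ((⨅ z, (F z + ‖z - u‖ ^ 2 / (2 * μ))) + c - b * Iy) / a ≤ Ix := by
      rw [hIx]
      refine le_ciInf fun z₁ => ?_
      rw [div_le_iff₀ ha']
      linarith [step1 z₁]
    have h := (div_le_iff₀ ha').mp this
    linarith [h]
  linarith [step2]
end

section
/- Let E be a real inner product space, μ > 0 and x ∈ E. Then ⨅_{z ∈ E} ( ‖z‖ + ‖z − x‖²/(2μ) ) = ‖x‖²/(2μ) if ‖x‖ ≤ μ, and = ‖x‖ − μ/2 if ‖x‖ > μ. That is, the Moreau envelope of the norm is the Huber function H_μ(x) := if ‖x‖ ≤ μ then ‖x‖²/(2μ) else ‖x‖ − μ/2. -/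
/-! Since `‖z - x‖ ≥ |‖x‖ - ‖z‖|`, the objective at `z` is at least the one-dimensional
objective `t + (‖x‖ - t)² / (2μ)` at `t = ‖z‖`, and equality holds for `z` on the segment
`[0, x]`. The one-dimensional problem over `t ≥ 0` is minimised at `t = max 0 (‖x‖ - μ)`,
with value the Huber function. -/

noncomputable def huber (μ r : ℝ) : ℝ :=
  if r ≤ μ then r ^ 2 / (2 * μ) else r - μ / 2

section Huber

variable {μ r : ℝ}

theorem huber_le_add_sq_div (hμ : 0 < μ) {t : ℝ} (ht : 0 ≤ t) :
    huber μ r ≤ t + (r - t) ^ 2 / (2 * μ) := by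
  unfold huber
  split_ifs with hr
  · rw [div_le_iff₀ (by positivity), add_mul, div_mul_cancel₀ _ (by positivity)]
    nlinarith
  · rw [← sub_le_iff_le_add', le_div_iff₀ (by positivity)]
    nlinarith [sq_nonneg (r - t - μ)]

theorem huber_eq_add_sq_div_max (hμ : 0 < μ) :
    huber μ r = max 0 (r - μ) + (r - max 0 (r - μ)) ^ 2 / (2 * μ) := by
  unfold huber
  split_ifs with hr
  · rw [max_eq_left (by linarith)]
    ring
  · rw [max_eq_right (by linarith)]
    field_simp
    ring

end Huber

theorem exists_norm_eq_and_norm_sub_eq {E : Type*} [NormedAddCommGroup E] [NormedSpace ℝ E]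
    (x : E) {t : ℝ} (ht₀ : 0 ≤ t) (ht : t ≤ ‖x‖) : ∃ z : E, ‖z‖ = t ∧ ‖z - x‖ = ‖x‖ - t := by
  rcases eq_or_ne x 0 with rfl | hx
  · obtain rfl : t = 0 := le_antisymm (by simpa using ht) ht₀
    exact ⟨0, by simp⟩
  have hx' : 0 < ‖x‖ := norm_pos_iff.mpr hx
  refine ⟨(t / ‖x‖) • x, ?_, ?_⟩
  · rw [norm_smul, Real.norm_of_nonneg (by positivity), div_mul_cancel₀ _ hx'.ne']
  · have hcoef : 0 ≤ 1 - t / ‖x‖ := sub_nonneg.mpr ((div_le_one hx').mpr ht)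
    have hsub : (t / ‖x‖) • x - x = -((1 - t / ‖x‖) • x) := by rw [sub_smul, one_smul, neg_sub]
    rw [hsub, norm_neg, norm_smul, Real.norm_of_nonneg hcoef, sub_mul,
      one_mul, div_mul_cancel₀ _ hx'.ne']

theorem sq_norm_sub_norm_le {E : Type*} [SeminormedAddCommGroup E] (x z : E) :
    (‖x‖ - ‖z‖) ^ 2 ≤ ‖z - x‖ ^ 2 := by
  rw [← sq_abs, norm_sub_rev]
  exact pow_le_pow_left₀ (abs_nonneg _) (abs_norm_sub_norm_le x z) 2

/-- **Moreau envelope of the norm is the Huber function.** For a real inner product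
space `E`, `μ > 0` and `x ∈ E`,
`⨅_z (‖z‖ + ‖z - x‖²/(2μ)) = ‖x‖²/(2μ)` if `‖x‖ ≤ μ`, and `= ‖x‖ − μ/2` otherwise. -/
theorem moreau_envelope_norm_eq_huber
    {E : Type*} [NormedAddCommGroup E] [InnerProductSpace ℝ E]
    (μ : ℝ) (hμ : 0 < μ) (x : E) :
    (⨅ z : E, (‖z‖ + ‖z - x‖ ^ 2 / (2 * μ))) =
      if ‖x‖ ≤ μ then ‖x‖ ^ 2 / (2 * μ) else ‖x‖ - μ / 2 := by
  change _ = huber μ ‖x‖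
  refine IsLeast.isGLB ⟨?_, ?_⟩ |>.ciInf_eq
  · obtain ⟨z, hz, hzx⟩ := exists_norm_eq_and_norm_sub_eq x (le_max_left 0 (‖x‖ - μ))
      (max_le (norm_nonneg x) (by linarith))
    exact ⟨z, by dsimp only; rw [hz, hzx, huber_eq_add_sq_div_max hμ]⟩
  · rintro _ ⟨z, rfl⟩
    calc huber μ ‖x‖ ≤ ‖z‖ + (‖x‖ - ‖z‖) ^ 2 / (2 * μ) := huber_le_add_sq_div hμ (norm_nonneg z)
      _ ≤ ‖z‖ + ‖z - x‖ ^ 2 / (2 * μ) := by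
        gcongr ‖z‖ + ?_ / _
        exact sq_norm_sub_norm_le x z
end

section
/- Let m be a positive natural number, μ > 0 and u ∈ ℝ^m. Then ⨅_{z ∈ ℝ^m} ( Σ_{i=1}^m |z_i| + (1/(2μ)) Σ_{i=1}^m (z_i − u_i)² ) = Σ_{i=1}^m h_μ(u_i), where h_μ : ℝ → ℝ is the scalar Huber function h_μ(t) := t²/(2μ) if |t| ≤ μ and |t| − μ/2 otherwise. That is, the Moreau envelope of the ℓ₁-norm is the sum of componentwise Huber functions. -/
lemma huber_scalar_le (μ : ℝ) (hμ : 0 < μ) (a t : ℝ) :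
    (if |a| ≤ μ then a ^ 2 / (2 * μ) else |a| - μ / 2) ≤ |t| + (t - a) ^ 2 / (2 * μ) := by
  have h2μ : (0:ℝ) < 2 * μ := by linarith
  split_ifs with h
  · have key : a ^ 2 - |t| * (2 * μ) ≤ (t - a) ^ 2 := by
      nlinarith [le_abs_self (a * t), abs_mul a t, sq_abs t, abs_nonneg t, abs_nonneg a]
    have h1 := (div_le_div_iff_of_pos_right h2μ).mpr key
    have e : (a ^ 2 - |t| * (2 * μ)) / (2 * μ) = a ^ 2 / (2 * μ) - |t| := by
      field_simp
    rw [e] at h1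
    linarith
  · have key : (|a| - μ / 2 - |t|) * (2 * μ) ≤ (t - a) ^ 2 := by
      nlinarith [sq_nonneg (|t| - |a| + μ), sq_abs (t - a),
        abs_sub_abs_le_abs_sub t a, abs_sub_abs_le_abs_sub a t,
        abs_sub_comm a t, abs_nonneg (t - a)]
    have h1 := (le_div_iff₀ h2μ).mpr key
    linarith [h1]

lemma huber_scalar_eq (μ : ℝ) (hμ : 0 < μ) (a : ℝ) :
    |(if |a| ≤ μ then (0:ℝ) else a - μ * Real.sign a)| +
      ((if |a| ≤ μ then (0:ℝ) else a - μ * Real.sign a) - a) ^ 2 / (2 * μ) =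
    (if |a| ≤ μ then a ^ 2 / (2 * μ) else |a| - μ / 2) := by
  split_ifs with h
  · simp [neg_sq]
  · push_neg at h
    rcases lt_trichotomy a 0 with ha | ha | ha
    · rw [Real.sign_of_neg ha]
      have h1 : a + μ < 0 := by
        have := abs_of_neg ha; linarith [h.le, abs_of_neg ha]
      rw [abs_of_neg ha] at h ⊢
      rw [abs_of_neg (show a - μ * (-1) < 0 by linarith)]
      field_simp; ring
    · simp [ha] at h; linarith [abs_nonneg (0:ℝ), hμ, h]
    · rw [Real.sign_of_pos ha]
      rw [abs_of_pos ha] at h ⊢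
      rw [abs_of_pos (show (0:ℝ) < a - μ * 1 by linarith)]
      field_simp; ring

/-- **Moreau envelope of the ℓ₁-norm is the sum of componentwise Huber functions.**
For `m > 0`, `μ > 0` and `u ∈ ℝ^m`,
`⨅_z (Σᵢ |zᵢ| + (1/(2μ)) Σᵢ (zᵢ − uᵢ)²) = Σᵢ h_μ(uᵢ)`,
where `h_μ(t) = t²/(2μ)` if `|t| ≤ μ` and `|t| − μ/2` otherwise. -/
theorem moreau_envelope_l1_norm
    (m : ℕ) (hm : 0 < m) (μ : ℝ) (hμ : 0 < μ) (u : EuclideanSpace ℝ (Fin m)) :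
    (⨅ z : EuclideanSpace ℝ (Fin m),
        ((∑ i, |z i|) + (1 / (2 * μ)) * ∑ i, (z i - u i) ^ 2)) =
      ∑ i, (if |u i| ≤ μ then (u i) ^ 2 / (2 * μ) else |u i| - μ / 2) := by
  have h2μ : (0:ℝ) < 2 * μ := by linarith
  have rewrite_f : ∀ z : EuclideanSpace ℝ (Fin m),
      ((∑ i, |z i|) + (1 / (2 * μ)) * ∑ i, (z i - u i) ^ 2)
        = ∑ i, (|z i| + (z i - u i) ^ 2 / (2 * μ)) := by
    intro z
    rw [Finset.mul_sum, ← Finset.sum_add_distrib]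
    congr 1; funext i; ring
  apply le_antisymm
  · -- upper bound: evaluate at the soft-threshold point
    set zstar : EuclideanSpace ℝ (Fin m) :=
      WithLp.toLp 2 (fun i => if |u i| ≤ μ then (0:ℝ) else u i - μ * Real.sign (u i)) with hz
    have hbdd : BddBelow (Set.range fun z : EuclideanSpace ℝ (Fin m) =>
        ((∑ i, |z i|) + (1 / (2 * μ)) * ∑ i, (z i - u i) ^ 2)) := by
      refine ⟨0, ?_⟩
      rintro x ⟨z, rfl⟩
      have h1 : (0:ℝ) ≤ ∑ i, |z i| := Finset.sum_nonneg fun i _ => abs_nonneg _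
      have h2 : (0:ℝ) ≤ ∑ i, (z i - u i) ^ 2 := Finset.sum_nonneg fun i _ => sq_nonneg _
      have : (0:ℝ) ≤ 1 / (2 * μ) := by positivity
      positivity
    refine ciInf_le_of_le hbdd zstar (le_of_eq ?_)
    rw [rewrite_f]
    refine Finset.sum_congr rfl fun i _ => ?_
    exact huber_scalar_eq μ hμ (u i)
  · -- lower bound
    refine le_ciInf fun z => ?_
    rw [rewrite_f]
    exact Finset.sum_le_sum fun i _ => huber_scalar_le μ hμ (u i) (z i)
end

section
/- Let E and X be real inner product spaces, A : E → X a continuous linear map with operator norm ‖A‖, and b ∈ X. If ℓ : X → ℝ is smoothable with parameters (a, β), then the function F : E → ℝ, F(u) := ℓ(A u + b), is smoothable with parameters (a, β·‖A‖²): for every μ > 0 the function u ↦ ℓ_μ(A u + b), where ℓ_μ is a smooth approximation of ℓ, is a differentiable convex function satisfying the sandwich F_μ ≤ F ≤ F_μ + a·μ with gradient Lipschitz constant β‖A‖²/μ. -/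
/-!
The smooth approximation of `u ↦ ℓ (A u + b)` is `u ↦ ℓ_μ (A u + b)`. Precomposition with an
affine map preserves convexity and the sandwich bounds; by the chain rule its gradient is
`Aᵀ ∇ℓ_μ (A u + b)`, and since `‖Aᵀ‖ = ‖A‖` the Lipschitz constant picks up one factor `‖A‖`
from `Aᵀ` and one from the inner map `u ↦ A u + b`.
-/

/-- A convex function `F` on a convex set `U` of a real inner product space is
*smoothable* with parameters `(a, b)` if for every `μ > 0` there is a differentiable
convex function `F_μ` on `U` with `F_μ ≤ F ≤ F_μ + a·μ` on `U` whose gradient is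
`(b/μ)`-Lipschitz on `U`. -/
def Smoothable {E : Type*} [NormedAddCommGroup E] [InnerProductSpace ℝ E] [CompleteSpace E]
    (U : Set E) (F : E → ℝ) (a b : ℝ) : Prop :=
  ∀ μ : ℝ, 0 < μ → ∃ (Fμ : E → ℝ) (g : E → E),
    ConvexOn ℝ U Fμ ∧
    (∀ u ∈ U, HasGradientAt Fμ (g u) u) ∧
    (∀ u ∈ U, Fμ u ≤ F u ∧ F u ≤ Fμ u + a * μ) ∧
    (∀ u₁ ∈ U, ∀ u₂ ∈ U, ‖g u₁ - g u₂‖ ≤ (b / μ) * ‖u₁ - u₂‖)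

open ContinuousLinearMap InnerProductSpace

theorem HasGradientAt.comp_hasFDerivAt {𝕜 E F : Type*} [RCLike 𝕜]
    [NormedAddCommGroup E] [InnerProductSpace 𝕜 E] [CompleteSpace E]
    [NormedAddCommGroup F] [InnerProductSpace 𝕜 F] [CompleteSpace F]
    {f : F → 𝕜} {f' : F} {φ : E → F} {φ' : E →L[𝕜] F} {u : E}
    (hf : HasGradientAt f f' (φ u)) (hφ : HasFDerivAt φ φ' u) :
    HasGradientAt (f ∘ φ) (adjoint φ' f') u := by
  have h : toDual 𝕜 E (adjoint φ' f') = (toDual 𝕜 F f').comp φ' := by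
    ext v
    simp [adjoint_inner_left]
  rw [hasGradientAt_iff_hasFDerivAt, h]
  exact hf.hasFDerivAt.comp u hφ

theorem ConvexOn.comp_linearMap_add_const {𝕜 E F β : Type*} [Semiring 𝕜] [PartialOrder 𝕜]
    [AddCommMonoid E] [AddCommMonoid F] [AddCommMonoid β] [PartialOrder β]
    [Module 𝕜 E] [Module 𝕜 F] [SMul 𝕜 β] {f : F → β}
    (hf : ConvexOn 𝕜 Set.univ f) (A : E →ₗ[𝕜] F) (b : F) :
    ConvexOn 𝕜 Set.univ (fun u => f (A u + b)) := by
  simpa [Function.comp_def, add_comm] using (hf.translate_right b).comp_linearMap A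

theorem norm_adjoint_comp_sub_le {𝕜 E F : Type*} [RCLike 𝕜]
    [NormedAddCommGroup E] [InnerProductSpace 𝕜 E] [CompleteSpace E]
    [NormedAddCommGroup F] [InnerProductSpace 𝕜 F] [CompleteSpace F]
    (A : E →L[𝕜] F) (b : F) {g : F → F} {L : ℝ} (hL : 0 ≤ L)
    (hg : ∀ x₁ x₂, ‖g x₁ - g x₂‖ ≤ L * ‖x₁ - x₂‖) (u₁ u₂ : E) :
    ‖adjoint A (g (A u₁ + b)) - adjoint A (g (A u₂ + b))‖ ≤ L * ‖A‖ ^ 2 * ‖u₁ - u₂‖ :=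
  calc ‖adjoint A (g (A u₁ + b)) - adjoint A (g (A u₂ + b))‖
      ≤ ‖A‖ * ‖g (A u₁ + b) - g (A u₂ + b)‖ := by
        rw [← map_sub, ← LinearIsometryEquiv.norm_map adjoint A]
        exact le_opNorm _ _
    _ ≤ ‖A‖ * (L * ‖A (u₁ - u₂)‖) := by
        grw [hg, add_sub_add_right_eq_sub, map_sub]
    _ ≤ ‖A‖ * (L * (‖A‖ * ‖u₁ - u₂‖)) := by grw [le_opNorm]
    _ = L * ‖A‖ ^ 2 * ‖u₁ - u₂‖ := by ring

theorem smoothable_comp_affine_general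
    {E X : Type*} [NormedAddCommGroup E] [InnerProductSpace ℝ E] [CompleteSpace E]
    [NormedAddCommGroup X] [InnerProductSpace ℝ X] [CompleteSpace X]
    (A : E →L[ℝ] X) (b : X)
    (ℓ : X → ℝ)
    (a β : ℝ) (hβ : 0 ≤ β)
    (hs : Smoothable Set.univ ℓ a β) :
    Smoothable Set.univ (fun u => ℓ (A u + b)) a (β * ‖A‖ ^ 2) ∧
    ∀ μ : ℝ, 0 < μ → ∀ (ℓμ : X → ℝ) (gℓ : X → X),
      ConvexOn ℝ Set.univ ℓμ →
      (∀ x, HasGradientAt ℓμ (gℓ x) x) →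
      (∀ x, ℓμ x ≤ ℓ x ∧ ℓ x ≤ ℓμ x + a * μ) →
      (∀ x₁ x₂, ‖gℓ x₁ - gℓ x₂‖ ≤ (β / μ) * ‖x₁ - x₂‖) →
      ConvexOn ℝ Set.univ (fun u => ℓμ (A u + b)) ∧
      (∀ u, HasGradientAt (fun u => ℓμ (A u + b))
        ((ContinuousLinearMap.adjoint A) (gℓ (A u + b))) u) ∧
      (∀ u, ℓμ (A u + b) ≤ ℓ (A u + b) ∧ ℓ (A u + b) ≤ ℓμ (A u + b) + a * μ) ∧
      (∀ u₁ u₂, ‖(ContinuousLinearMap.adjoint A) (gℓ (A u₁ + b)) -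
          (ContinuousLinearMap.adjoint A) (gℓ (A u₂ + b))‖ ≤
        (β * ‖A‖ ^ 2 / μ) * ‖u₁ - u₂‖) := by
  refine ⟨fun μ hμ => ?_, fun μ hμ ℓμ gℓ hconv hgrad hsandwich hlip =>
    ⟨hconv.comp_linearMap_add_const A.toLinearMap b,
      fun u => (hgrad _).comp_hasFDerivAt (A.hasFDerivAt.add_const b),
      fun u => hsandwich _, fun u₁ u₂ => ?_⟩⟩
  · obtain ⟨ℓμ, gℓ, hconv, hgrad, hsandwich, hlip⟩ := hs μ hμ
    refine ⟨fun u => ℓμ (A u + b), fun u => adjoint A (gℓ (A u + b)),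
      hconv.comp_linearMap_add_const A.toLinearMap b,
      fun u _ => (hgrad _ trivial).comp_hasFDerivAt (A.hasFDerivAt.add_const b),
      fun u _ => hsandwich _ trivial, fun u₁ _ u₂ _ => ?_⟩
    rw [mul_div_right_comm]
    exact norm_adjoint_comp_sub_le A b (div_nonneg hβ hμ.le)
      (fun x₁ x₂ => hlip x₁ trivial x₂ trivial) u₁ u₂
  · rw [mul_div_right_comm]
    exact norm_adjoint_comp_sub_le A b (div_nonneg hβ hμ.le) hlip u₁ u₂

/-- **Composition of a smoothable function with an affine map is smoothable.**
If `ℓ : X → ℝ` is smoothable with parameters `(a, β)`, `A : E →L[ℝ] X` and `b ∈ X`,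
then `F(u) := ℓ(A u + b)` is smoothable with parameters `(a, β·‖A‖²)`; moreover,
for every `μ > 0` and every smooth approximation `ℓ_μ` of `ℓ` (with gradient `gℓ`),
the function `F_μ := u ↦ ℓ_μ(A u + b)` is convex and differentiable with gradient
`u ↦ Aᵀ(gℓ(A u + b))`, satisfies `F_μ ≤ F ≤ F_μ + a·μ`, and its gradient is
`(β‖A‖²/μ)`-Lipschitz. -/
theorem smoothable_comp_affine
    {E X : Type*} [NormedAddCommGroup E] [InnerProductSpace ℝ E] [CompleteSpace E]
    [NormedAddCommGroup X] [InnerProductSpace ℝ X] [CompleteSpace X]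
    (A : E →L[ℝ] X) (b : X)
    (ℓ : X → ℝ) (hℓ : ConvexOn ℝ Set.univ ℓ)
    (a β : ℝ) (ha : 0 ≤ a) (hβ : 0 ≤ β)
    (hs : Smoothable Set.univ ℓ a β) :
    Smoothable Set.univ (fun u => ℓ (A u + b)) a (β * ‖A‖ ^ 2) ∧
    ∀ μ : ℝ, 0 < μ → ∀ (ℓμ : X → ℝ) (gℓ : X → X),
      ConvexOn ℝ Set.univ ℓμ →
      (∀ x, HasGradientAt ℓμ (gℓ x) x) →
      (∀ x, ℓμ x ≤ ℓ x ∧ ℓ x ≤ ℓμ x + a * μ) →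
      (∀ x₁ x₂, ‖gℓ x₁ - gℓ x₂‖ ≤ (β / μ) * ‖x₁ - x₂‖) →
      ConvexOn ℝ Set.univ (fun u => ℓμ (A u + b)) ∧
      (∀ u, HasGradientAt (fun u => ℓμ (A u + b))
        ((ContinuousLinearMap.adjoint A) (gℓ (A u + b))) u) ∧
      (∀ u, ℓμ (A u + b) ≤ ℓ (A u + b) ∧ ℓ (A u + b) ≤ ℓμ (A u + b) + a * μ) ∧
      (∀ u₁ u₂, ‖(ContinuousLinearMap.adjoint A) (gℓ (A u₁ + b)) -
          (ContinuousLinearMap.adjoint A) (gℓ (A u₂ + b))‖ ≤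
        (β * ‖A‖ ^ 2 / μ) * ‖u₁ - u₂‖) :=
  smoothable_comp_affine_general A b ℓ a β hβ hs
end

section
/- Let H be a real inner product space, X ⊆ H a convex set, and f : H → ℝ differentiable with gradient ∇f. Assume f is m-strongly convex and L-smooth in the sense that for all x, y ∈ H: f(x) − f(y) ≥ ⟪∇f(y), x − y⟫ + (m/2)‖x − y‖² and f(x) − f(y) ≤ ⟪∇f(y), x − y⟫ + (L/2)‖x − y‖², with m ≥ 0, L > 0. Let α > 0, β ∈ ℝ, x₋, x₀ ∈ X, set y := x₀ + β(x₀ − x₋), and let x⁺ ∈ X satisfy ⟪(y − α∇f(y)) − x⁺, z − x⁺⟫ ≤ 0 for all z ∈ X. Set u := (y − x⁺)/α. Then f(x₀) − f(x⁺) ≥ (m·β²/2)·‖x₀ − x₋‖² + β·⟪u, x₋ − x₀⟫ + (α(2 − Lα)/2)·‖u‖². -/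
open scoped RealInnerProductSpace

/-- **First inequality of the stability theorem for the online accelerated-gradient
system.** Let `f` be `m`-strongly convex and `L`-smooth with gradient `∇f`, let
`y = x₀ + β(x₀ − x₋)`, let `x⁺ ∈ X` be the projection of the gradient step
`y − α∇f(y)` onto the convex set `X` (characterized by the variational inequality),
and let `u = (y − x⁺)/α` be the composite gradient mapping. Then
`f(x₀) − f(x⁺) ≥ (mβ²/2)‖x₀ − x₋‖² + β⟪u, x₋ − x₀⟫ + (α(2 − Lα)/2)‖u‖²`. -/
theorem accelerated_gradient_stability_ineq_one
    {H : Type*} [NormedAddCommGroup H] [InnerProductSpace ℝ H]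
    (X : Set H) (hX : Convex ℝ X)
    (f : H → ℝ) (f' : H → H) (m L : ℝ) (hm : 0 ≤ m) (hL : 0 < L)
    (hsc : ∀ x y, ⟪f' y, x - y⟫ + (m / 2) * ‖x - y‖ ^ 2 ≤ f x - f y)
    (hsm : ∀ x y, f x - f y ≤ ⟪f' y, x - y⟫ + (L / 2) * ‖x - y‖ ^ 2)
    (α β : ℝ) (hα : 0 < α)
    (xm x₀ : H) (hxm : xm ∈ X) (hx₀ : x₀ ∈ X)
    (y : H) (hy : y = x₀ + β • (x₀ - xm))
    (xp : H) (hxp : xp ∈ X)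
    (hproj : ∀ z ∈ X, ⟪(y - α • f' y) - xp, z - xp⟫ ≤ 0)
    (u : H) (hu : u = α⁻¹ • (y - xp)) :
    (m * β ^ 2 / 2) * ‖x₀ - xm‖ ^ 2 + β * ⟪u, xm - x₀⟫ +
      (α * (2 - L * α) / 2) * ‖u‖ ^ 2 ≤ f x₀ - f xp := by
  have hα' : (α : ℝ) ≠ 0 := ne_of_gt hα
  have hyxp : y - xp = α • u := by
    rw [hu, smul_smul, mul_inv_cancel₀ hα', one_smul]
  -- abbreviations
  set g := f' y with hg
  have hx0y : x₀ - y = β • (xm - x₀) := by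
    rw [hy]; rw [smul_sub, smul_sub]; abel
  have hxpy : xp - y = -(α • u) := by rw [← hyxp]; abel
  have hx0xp : x₀ - xp = β • (xm - x₀) + α • u := by
    rw [← hx0y, ← hyxp]; abel
  have h1 := hsc x₀ y
  have h2 := hsm xp y
  have h3 := hproj x₀ hx₀
  rw [hx0y] at h1
  rw [hxpy] at h2
  have hvi : y - α • g - xp = α • u - α • g := by rw [← hyxp]; abel
  rw [hvi, hx0xp] at h3
  have en1 : ‖β • (xm - x₀)‖ ^ 2 = β ^ 2 * ‖xm - x₀‖ ^ 2 := by
    rw [norm_smul, mul_pow, Real.norm_eq_abs, sq_abs]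
  have en2 : ‖-(α • u)‖ ^ 2 = α ^ 2 * ‖u‖ ^ 2 := by
    rw [norm_neg, norm_smul, mul_pow, Real.norm_eq_abs, sq_abs]
  rw [real_inner_smul_right, en1] at h1
  rw [inner_neg_right, real_inner_smul_right, en2] at h2
  rw [inner_sub_left, inner_add_right, inner_add_right,
    real_inner_smul_left, real_inner_smul_left, real_inner_smul_right,
    real_inner_smul_right, real_inner_smul_right, real_inner_smul_right,
    real_inner_self_eq_norm_sq] at h3
  rw [real_inner_smul_left, real_inner_smul_left] at h3
  have hsym : ⟪u, xm - x₀⟫ = ⟪xm - x₀, u⟫ := real_inner_comm _ _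
  have hnn : ‖xm - x₀‖ ^ 2 = ‖x₀ - xm‖ ^ 2 := by rw [← norm_neg]; congr 1; abel
  rw [hnn] at h1
  nlinarith [h1, h2, h3, mul_pos hα hα]
end

section
/- Let H be a real inner product space, X ⊆ H a convex set, and f : H → ℝ differentiable with gradient ∇f. Assume f is m-strongly convex and L-smooth in the sense that for all x, y ∈ H: f(x) − f(y) ≥ ⟪∇f(y), x − y⟫ + (m/2)‖x − y‖² and f(x) − f(y) ≤ ⟪∇f(y), x − y⟫ + (L/2)‖x − y‖², with m ≥ 0, L > 0. Let α > 0, β ∈ ℝ, x₋, x₀ ∈ X, set y := x₀ + β(x₀ − x₋), and let x⁺ ∈ X satisfy ⟪(y − α∇f(y)) − x⁺, z − x⁺⟫ ≤ 0 for all z ∈ X. Set u := (y − x⁺)/α. Then for every x* ∈ X: f(x*) − f(x⁺) ≥ (m/2)·‖y − x*‖² + ⟪u, x* − y⟫ + (α(2 − Lα)/2)·‖u‖². -/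
open scoped RealInnerProductSpace

/-- **Second inequality of the stability theorem for the online accelerated-gradient
system.** Let `f` be `m`-strongly convex and `L`-smooth with gradient `∇f`, let
`y = x₀ + β(x₀ − x₋)`, let `x⁺ ∈ X` be the projection of the gradient step
`y − α∇f(y)` onto the convex set `X`, and let `u = (y − x⁺)/α`. Then for every
`x* ∈ X`: `f(x*) − f(x⁺) ≥ (m/2)‖y − x*‖² + ⟪u, x* − y⟫ + (α(2 − Lα)/2)‖u‖²`. -/
theorem accelerated_gradient_stability_ineq_two
    {H : Type*} [NormedAddCommGroup H] [InnerProductSpace ℝ H]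
    (X : Set H) (hX : Convex ℝ X)
    (f : H → ℝ) (f' : H → H) (m L : ℝ) (hm : 0 ≤ m) (hL : 0 < L)
    (hsc : ∀ x y, ⟪f' y, x - y⟫ + (m / 2) * ‖x - y‖ ^ 2 ≤ f x - f y)
    (hsm : ∀ x y, f x - f y ≤ ⟪f' y, x - y⟫ + (L / 2) * ‖x - y‖ ^ 2)
    (α β : ℝ) (hα : 0 < α)
    (xm x₀ : H) (hxm : xm ∈ X) (hx₀ : x₀ ∈ X)
    (y : H) (hy : y = x₀ + β • (x₀ - xm))
    (xp : H) (hxp : xp ∈ X)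
    (hproj : ∀ z ∈ X, ⟪(y - α • f' y) - xp, z - xp⟫ ≤ 0)
    (u : H) (hu : u = α⁻¹ • (y - xp)) :
    ∀ xstar ∈ X,
      (m / 2) * ‖y - xstar‖ ^ 2 + ⟪u, xstar - y⟫ +
        (α * (2 - L * α) / 2) * ‖u‖ ^ 2 ≤ f xstar - f xp := by
  intro xstar hxstar
  have hα' : α ≠ 0 := ne_of_gt hα
  have hyxp : y - xp = α • u := by
    rw [hu, smul_smul, mul_inv_cancel₀ hα', one_smul]
  have h1 := hsc xstar y
  have h2 := hsm xp y
  have h3 := hproj xstar hxstar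
  have hxpy : xp - y = -(α • u) := by rw [← hyxp]; abel
  have hstar : xstar - xp = (xstar - y) + α • u := by rw [← hyxp]; abel
  have hp : (y - α • f' y) - xp = α • u - α • f' y := by rw [← hyxp]; abel
  rw [hxpy] at h2
  rw [hp] at h3
  simp only [inner_sub_left, inner_add_right, inner_neg_right, real_inner_smul_left,
    real_inner_smul_right, norm_neg, norm_smul, Real.norm_eq_abs, abs_of_pos hα,
    mul_pow] at h1 h2 h3 ⊢
  rw [hstar] at h3
  simp only [inner_add_right, real_inner_smul_right, real_inner_self_eq_norm_sq] at h3
  have hnorm : ‖y - xstar‖ = ‖xstar - y‖ := by rw [← norm_neg]; congr 1; abel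
  rw [hnorm]
  have hfu : ⟪f' y, xstar - y⟫ + α * ⟪f' y, u⟫ = ⟪f' y, xstar - xp⟫ := by
    rw [hstar, inner_add_right, real_inner_smul_right]
  have huu : ⟪u, xstar - xp⟫ = ⟪u, xstar - y⟫ + α * ‖u‖ ^ 2 := by
    rw [hstar, inner_add_right, real_inner_smul_right, real_inner_self_eq_norm_sq]
  have h3' : ⟪u, xstar - y⟫ + α * ‖u‖ ^ 2 ≤ ⟪f' y, xstar - y⟫ + α * ⟪f' y, u⟫ := by
    nlinarith [h3]
  nlinarith [h1, h2, h3', sq_nonneg α, sq_nonneg ‖u‖]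
end

section
/- Let T be a positive natural number, ξ₁, …, ξ_T ∈ ℝⁿ, and let P̂ := (1/T)·Σ_{k=1}^T δ_{ξ_k} be the associated empirical (uniform discrete) probability measure on ℝⁿ. Fix an index j and Δx ∈ ℝⁿ, and let Q := (1/T)·Σ_{k≠j} δ_{ξ_k} + (1/T)·δ_{ξ_j + Δx}. Then: (i) for every 1-Lipschitz function h : ℝⁿ → ℝ, ∫ h dQ − ∫ h dP̂ ≤ ‖Δx‖/T; and (ii) if ℓ : ℝⁿ → ℝ is convex and differentiable at ξ_j with gradient g ≠ 0, and Δx := (T·ε/‖g‖)·g for some ε > 0, then ∫ ℓ dQ − ∫ ℓ dP̂ ≥ ε·‖g‖. -/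
open MeasureTheory
open scoped ENNReal

lemma my_integrable_dirac {n : ℕ} (f : EuclideanSpace ℝ (Fin n) → ℝ)
    (a : EuclideanSpace ℝ (Fin n)) : Integrable f (Measure.dirac a) := by
  refine (integrable_const (f a)).congr ?_
  rw [Filter.eventuallyEq_iff_exists_mem]
  exact ⟨{a}, by rw [MeasureTheory.ae_dirac_eq]; exact rfl, fun x hx => by simp_all⟩

lemma my_int_sum {n : ℕ} (T : ℕ) (f : EuclideanSpace ℝ (Fin n) → ℝ) (s : Finset (Fin T))
    (ξ : Fin T → EuclideanSpace ℝ (Fin n)) :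
    (∫ x, f x ∂(∑ k ∈ s, Measure.dirac (ξ k))) = ∑ k ∈ s, f (ξ k) := by
  rw [integral_finset_sum_measure fun i _ => my_integrable_dirac f (ξ i)]
  simp [integral_dirac]

lemma my_int_diff {n : ℕ} (T : ℕ) (ξ : Fin T → EuclideanSpace ℝ (Fin n))
    (j : Fin T) (y : EuclideanSpace ℝ (Fin n)) (f : EuclideanSpace ℝ (Fin n) → ℝ) :
    (∫ x, f x ∂((T : ℝ≥0∞)⁻¹ • ((∑ k ∈ Finset.univ.erase j, Measure.dirac (ξ k)) +
          Measure.dirac y))) -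
        (∫ x, f x ∂((T : ℝ≥0∞)⁻¹ • ∑ k, Measure.dirac (ξ k))) = (f y - f (ξ j)) / T := by
  rw [integral_smul_measure, integral_smul_measure,
    integral_add_measure (integrable_finset_sum_measure.2 fun i _ => my_integrable_dirac f (ξ i))
      (my_integrable_dirac f y),
    my_int_sum, my_int_sum, integral_dirac]
  rw [← Finset.add_sum_erase _ _ (Finset.mem_univ j)]
  have : ((T : ℝ≥0∞)⁻¹).toReal = (T : ℝ)⁻¹ := by
    simp [ENNReal.toReal_inv]
  rw [this]
  simp only [smul_eq_mul]
  ring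

lemma my_grad_ineq {n : ℕ} (ℓ : EuclideanSpace ℝ (Fin n) → ℝ) (g x v : EuclideanSpace ℝ (Fin n))
    (hconv : ConvexOn ℝ Set.univ ℓ) (hg : HasGradientAt ℓ g x) :
    ℓ x + inner ℝ g v ≤ ℓ (x + v) := by
  set φ : ℝ → ℝ := fun t => ℓ (x + t • v) with hφ
  have hφconv : ConvexOn ℝ Set.univ φ := by
    refine ⟨convex_univ, fun s _ t _ a b ha hb hab => ?_⟩
    have := hconv.2 (Set.mem_univ (x + s • v)) (Set.mem_univ (x + t • v)) ha hb hab
    have e : a • (x + s • v) + b • (x + t • v) = x + (a • s + b • t) • v := by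
      have h1 : x = (a + b) • x := by rw [hab, one_smul]
      simp only [smul_eq_mul]
      nth_rewrite 3 [h1]
      module
    rw [e] at this
    simpa [hφ] using this
  have hd : HasDerivAt φ (inner ℝ g v) 0 := by
    have hc : HasDerivAt (fun t : ℝ => x + t • v) v 0 := by
      simpa using (hasDerivAt_id (0:ℝ)).smul_const v |>.const_add x
    have h0 : (x : EuclideanSpace ℝ (Fin n)) = x + (0:ℝ) • v := by simp
    rw [h0] at hg
    have := (hg.hasFDerivAt.comp_hasDerivAt 0 hc)
    simp [InnerProductSpace.toDual_apply_apply] at this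
    exact this
  have := hφconv.le_slope_of_hasDerivAt (Set.mem_univ (0:ℝ)) (Set.mem_univ (1:ℝ)) one_pos hd
  rw [slope_def_field] at this
  simp only [hφ, zero_smul, add_zero, one_smul] at this
  have h1 : (ℓ (x + v) - ℓ x) / (1 - 0) = ℓ (x + v) - ℓ x := by norm_num
  rw [h1] at this
  linarith

/-- **Perturbing one atom of an empirical measure.** Let `P̂ = (1/T)Σₖ δ_{ξₖ}` and let
`Q` be obtained from `P̂` by moving the atom `ξⱼ` to `ξⱼ + Δx`. Then (i) for every
`1`-Lipschitz `h`, `∫h dQ − ∫h dP̂ ≤ ‖Δx‖/T`; and (ii) if `ℓ` is convex and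
differentiable at `ξⱼ` with gradient `g ≠ 0` and `Δx = (Tε/‖g‖)·g` with `ε > 0`,
then `∫ℓ dQ − ∫ℓ dP̂ ≥ ε‖g‖`. -/
theorem empirical_measure_perturbation
    {n : ℕ} (T : ℕ) (hT : 0 < T) (ξ : Fin T → EuclideanSpace ℝ (Fin n))
    (j : Fin T) (Δx : EuclideanSpace ℝ (Fin n)) :
    (∀ h : EuclideanSpace ℝ (Fin n) → ℝ, (∀ x y, |h x - h y| ≤ ‖x - y‖) →
      (∫ x, h x ∂((T : ℝ≥0∞)⁻¹ • ((∑ k ∈ Finset.univ.erase j, Measure.dirac (ξ k)) +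
          Measure.dirac (ξ j + Δx)))) -
        (∫ x, h x ∂((T : ℝ≥0∞)⁻¹ • ∑ k, Measure.dirac (ξ k))) ≤ ‖Δx‖ / T) ∧
    (∀ ε : ℝ, 0 < ε → ∀ (ℓ : EuclideanSpace ℝ (Fin n) → ℝ) (g : EuclideanSpace ℝ (Fin n)),
      ConvexOn ℝ Set.univ ℓ → HasGradientAt ℓ g (ξ j) → g ≠ 0 →
      Δx = ((T : ℝ) * ε / ‖g‖) • g →
      ε * ‖g‖ ≤
        (∫ x, ℓ x ∂((T : ℝ≥0∞)⁻¹ • ((∑ k ∈ Finset.univ.erase j, Measure.dirac (ξ k)) +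
            Measure.dirac (ξ j + Δx)))) -
          (∫ x, ℓ x ∂((T : ℝ≥0∞)⁻¹ • ∑ k, Measure.dirac (ξ k)))) := by
  have hT' : (0:ℝ) < T := by exact_mod_cast hT
  constructor
  · intro h hLip
    rw [my_int_diff]
    have : h (ξ j + Δx) - h (ξ j) ≤ ‖Δx‖ := by
      have := (le_abs_self _).trans (hLip (ξ j + Δx) (ξ j))
      simpa using this
    exact div_le_div_of_nonneg_right this hT'.le |>.trans_eq rfl
  · intro ε hε ℓ g hconv hgrad hg hΔx
    rw [my_int_diff]
    have hgn : (0:ℝ) < ‖g‖ := norm_pos_iff.mpr hg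
    have hinner : (inner ℝ g Δx : ℝ) = T * ε * ‖g‖ := by
      rw [hΔx, real_inner_smul_right, real_inner_self_eq_norm_sq]
      field_simp
    have := my_grad_ineq ℓ g (ξ j) Δx hconv hgrad
    rw [hinner] at this
    rw [le_div_iff₀ hT']
    linarith
end
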